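/- arXiv:0805.4280 — 3 statements merged into one kernel-verified Lean document; each statement's English description precedes it below -/
import Mathlib

section
/- Let Ω = ω₁ be the first uncountable ordinal with the order topology and let (f_n) be a sequence in C_b(ω₁) converging to 0 uniformly on every compact subset of ω₁. Then there exists α < ω₁ such that f_n → 0 uniformly on [α, ω₁). -/
open Filter Topology

/-- The first uncountable ordinal `ω₁`, i.e. the space of all countable ordinals. -/
def Omega1 : Type 1 := {o : Ordinal.{0} // o < (Cardinal.aleph 1).ord}

noncomputable instance : LinearOrder Omega1 :=
  inferInstanceAs (LinearOrder {o : Ordinal.{0} // o < (Cardinal.aleph 1).ord})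

noncomputable instance : TopologicalSpace Omega1 := Preorder.topology Omega1

instance : OrderTopology Omega1 := ⟨rfl⟩

/-!
Every continuous function on `ω₁` is constant on a tail: otherwise one finds an increasing
sequence along which it oscillates by a fixed `ε`, contradicting continuity at the supremum of
the sequence, which is again a countable ordinal. Taking the supremum of the countably many tails
of the `f n`, all of them are constant from some `α` on, and convergence at the single point `α`
is then uniform convergence on `[α, ω₁)`.
-/

section SequentialSupremum

variable {X E : Type*} [LinearOrder X] [TopologicalSpace X] [OrderTopology X] [Nonempty X]
  (hX : ∀ b : ℕ → X, ∃ β, IsLUB (Set.range b) β)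
include hX

theorem exists_forall_ge_dist_lt [PseudoMetricSpace E] {g : X → E} (hg : Continuous g)
    {ε : ℝ} (hε : 0 < ε) : ∃ α, ∀ x, α ≤ x → dist (g x) (g α) < ε := by
  by_contra! hosc
  choose next hnext_ge hnext_dist using hosc
  set b : ℕ → X := fun k => next^[k] (Classical.arbitrary X)
  have hb_succ : ∀ k, b (k + 1) = next (b k) := fun k =>
    Function.iterate_succ_apply' next k _
  have hb_mono : Monotone b := monotone_nat_of_le_succ fun k => hb_succ k ▸ hnext_ge (b k)
  obtain ⟨β, hβ⟩ := hX b
  have hgb : CauchySeq (g ∘ b) :=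
    ((hg.tendsto β).comp (tendsto_atTop_isLUB hb_mono hβ)).cauchySeq
  obtain ⟨N, hN⟩ := Metric.cauchySeq_iff'.1 hgb ε hε
  have hstep := hN (N + 1) N.le_succ
  simp only [Function.comp_apply, hb_succ] at hstep
  exact (hnext_dist (b N)).not_gt hstep

theorem exists_forall_ge_eq [MetricSpace E] {g : X → E} (hg : Continuous g) :
    ∃ α, ∀ x, α ≤ x → g x = g α := by
  choose a ha using fun k : ℕ =>
    exists_forall_ge_dist_lt hX hg (Nat.one_div_pos_of_nat (n := k) (α := ℝ))
  obtain ⟨β, hβ⟩ := hX a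
  have hle : ∀ k, a k ≤ β := fun k => hβ.1 (Set.mem_range_self k)
  refine ⟨β, fun x hx => dist_le_zero.1 ?_⟩
  have hclose : ∀ k : ℕ, dist (g x) (g β) ≤ 2 * (1 / ((k : ℝ) + 1)) := fun k => by
    have h₁ := ha k x ((hle k).trans hx)
    have h₂ := ha k β (hle k)
    linarith [dist_triangle_right (g x) (g β) (g (a k))]
  have hlim := (tendsto_one_div_add_atTop_nhds_zero_nat (𝕜 := ℝ)).const_mul 2
  rw [mul_zero] at hlim
  exact ge_of_tendsto' hlim hclose

theorem exists_forall_ge_eq_seq [MetricSpace E] {f : ℕ → X → E} (hf : ∀ n, Continuous (f n)) :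
    ∃ α, ∀ n x, α ≤ x → f n x = f n α := by
  choose a ha using fun n => exists_forall_ge_eq hX (hf n)
  obtain ⟨β, hβ⟩ := hX a
  have hle : ∀ n, a n ≤ β := fun n => hβ.1 (Set.mem_range_self n)
  exact ⟨β, fun n x hx => (ha n x ((hle n).trans hx)).trans (ha n β (hle n)).symm⟩

end SequentialSupremum

namespace Omega1

instance : Nonempty Omega1 :=
  ⟨⟨0, Cardinal.ord_pos.2 (Cardinal.aleph_pos 1)⟩⟩

theorem exists_isLUB_range (b : ℕ → Omega1) : ∃ β : Omega1, IsLUB (Set.range b) β := by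
  have hsup : (⨆ k, (b k).1) < (Cardinal.aleph 1).ord := by
    have hb : ∀ k, (b k).1 < Ordinal.omega 1 := fun k => Cardinal.ord_aleph 1 ▸ (b k).2
    simpa only [Cardinal.ord_aleph] using Ordinal.iSup_lt_omega_one hb
  refine ⟨⟨_, hsup⟩, ?_, fun c hc => ?_⟩
  · rintro _ ⟨k, rfl⟩
    exact Subtype.coe_le_coe.1 (le_ciSup Ordinal.bddAbove_of_small k)
  · exact Subtype.coe_le_coe.1 (ciSup_le fun k => Subtype.coe_le_coe.2 (hc ⟨k, rfl⟩))

end Omega1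

/-- If a sequence `(f_n) ⊆ C_b(ω₁)` converges to `0` uniformly on every
compact subset of `ω₁`, then it converges to `0` uniformly on some tail `[α, ω₁)`. -/
theorem stmt13 (f : ℕ → BoundedContinuousFunction Omega1 ℝ)
    (hcpt : ∀ K : Set Omega1, IsCompact K → ∀ ε > (0 : ℝ),
      ∃ N : ℕ, ∀ n ≥ N, ∀ x ∈ K, |f n x| ≤ ε) :
    ∃ α : Omega1, ∀ ε > (0 : ℝ), ∃ N : ℕ, ∀ n ≥ N, ∀ x : Omega1, α ≤ x → |f n x| ≤ ε := by
  obtain ⟨α, hα⟩ := exists_forall_ge_eq_seq Omega1.exists_isLUB_range fun n => (f n).continuous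
  refine ⟨α, fun ε hε => ?_⟩
  obtain ⟨N, hN⟩ := hcpt {α} isCompact_singleton ε hε
  exact ⟨N, fun n hn x hx => hα n x hx ▸ hN n hn α rfl⟩
end

section
/- On ω₁ with the order topology, the functional Λ : C_b(ω₁) → ℝ assigning to f its eventual constant value (Λ(f) = c where f ≡ c on some tail [α, ω₁)) is a well-defined bounded linear functional with ‖Λ‖ = 1, and Λ is sequentially continuous with respect to uniform convergence on compact sets restricted to sup-norm bounded sequences: if sup_n ‖f_n‖_∞ < ∞ and f_n → 0 uniformly on compacts, then Λ(f_n) → 0. -/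
/-!
A continuous `f : ω₁ → ℝ` is Cauchy along `atTop`: otherwise iterating a witness of
non-Cauchyness gives a monotone sequence along which `f` jumps by `ε` at every step, and this
sequence converges (to its supremum), contradicting continuity there. Since countable sets of
countable ordinals are bounded, `atTop` on `ω₁` is closed under countable intersections, so the
Cauchy conditions for all `ε = 1/(n+1)` hold on one common tail and `f` is eventually constant.
`Λ` is the limit along `atTop`, hence linear of norm at most one. For a sequence `fₙ` the same
countable intersection property gives one point `b` past which every `fₙ` is constant, so
`Λ fₙ = fₙ b → 0` by convergence on the compact set `{b}`.
-/

open Filter Topology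

open Set
open scoped BoundedContinuousFunction

section

variable {α : Type*} [SemilatticeSup α] [Nonempty α]

theorem countableInterFilter_atTop_of_bddAbove_range (h : ∀ x : ℕ → α, BddAbove (range x)) :
    CountableInterFilter (atTop : Filter α) := by
  refine ⟨fun S hS hmem => ?_⟩
  rcases S.eq_empty_or_nonempty with rfl | hne
  · simp
  obtain ⟨s, rfl⟩ := hS.exists_eq_range hne
  choose a ha using fun n => mem_atTop_sets.1 (hmem _ (mem_range_self n))
  obtain ⟨b, hb⟩ := h a
  refine mem_atTop_sets.2 ⟨b, fun c hc => mem_sInter.2 ?_⟩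
  rintro _ ⟨n, rfl⟩
  exact ha n c ((hb (mem_range_self n)).trans hc)

variable [TopologicalSpace α]

theorem Continuous.cauchySeq_of_forall_monotone_tendsto {E : Type*} [PseudoMetricSpace E]
    {f : α → E} (hf : Continuous f)
    (hα : ∀ x : ℕ → α, Monotone x → ∃ δ, Tendsto x atTop (𝓝 δ)) : CauchySeq f := by
  rw [Metric.cauchySeq_iff']
  by_contra! h
  obtain ⟨ε, hε, hF⟩ := h
  choose F hFge hFdist using hF
  set x : ℕ → α := fun n => F^[n] (Classical.arbitrary α)
  have hx : ∀ n, x (n + 1) = F (x n) := fun n => Function.iterate_succ_apply' _ _ _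
  obtain ⟨δ, hδ⟩ := hα x (monotone_nat_of_le_succ fun n => (hx n).symm ▸ hFge (x n))
  obtain ⟨N, hN⟩ := Metric.cauchySeq_iff'.1 ((hf.tendsto δ).comp hδ).cauchySeq ε hε
  have := hN (N + 1) N.le_succ
  simp only [Function.comp_apply, hx] at this
  exact (hFdist (x N)).not_gt this

end

theorem Filter.eventuallyConst_of_cauchy_map {X E : Type*} [MetricSpace E] {l : Filter X}
    [CountableInterFilter l] {f : X → E} (hf : Cauchy (map f l)) : EventuallyConst f l := by
  choose t ht hdist using fun n : ℕ =>
    (Metric.cauchy_iff.1 hf).2 (1 / (n + 1)) Nat.one_div_pos_of_nat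
  refine ⟨⋂ n, t n, countable_iInter_mem.2 ht, fun y hy z hz => eq_of_forall_dist_le fun ε hε => ?_⟩
  obtain ⟨n, hn⟩ := exists_nat_one_div_lt hε
  exact (hdist n y (mem_iInter.1 hy n) z (mem_iInter.1 hz n)).le.trans hn.le

theorem Filter.tendsto_of_forall_eventually_eq {ι X E : Type*} [Countable ι] [TopologicalSpace E]
    {l : Filter X} [CountableInterFilter l] [l.NeBot] {L : Filter ι} {f : ι → X → E}
    {c : ι → E} {y : E} (hc : ∀ i, ∀ᶠ x in l, f i x = c i)
    (hf : ∀ x, Tendsto (fun i => f i x) L (𝓝 y)) : Tendsto c L (𝓝 y) := by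
  obtain ⟨b, hb⟩ := (eventually_countable_forall.2 hc).exists
  exact (hf b).congr hb

namespace BoundedContinuousFunction

variable {X 𝕜 E : Type*} [TopologicalSpace X] [NontriviallyNormedField 𝕜] [NormedAddCommGroup E]
  [NormedSpace 𝕜 E] (l : Filter X) [l.NeBot] (h : ∀ f : X →ᵇ E, ∃ c, Tendsto f l (𝓝 c))

variable (𝕜) in
noncomputable def limCLM : (X →ᵇ E) →L[𝕜] E :=
  LinearMap.mkContinuous
    { toFun := fun f => limUnder l f
      map_add' := fun f g => ((tendsto_nhds_limUnder (h f)).add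
        (tendsto_nhds_limUnder (h g))).limUnder_eq
      map_smul' := fun a f => ((tendsto_nhds_limUnder (h f)).const_smul a).limUnder_eq } 1
    fun f => by
      rw [one_mul]
      exact le_of_tendsto' (tendsto_nhds_limUnder (h f)).norm f.norm_coe_le_norm

variable {l h}

theorem limCLM_eq_of_tendsto {f : X →ᵇ E} {c : E} (hf : Tendsto f l (𝓝 c)) :
    limCLM 𝕜 l h f = c :=
  hf.limUnder_eq

theorem norm_limCLM_le : ‖limCLM 𝕜 l h‖ ≤ 1 :=
  LinearMap.mkContinuous_norm_le _ zero_le_one _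

end BoundedContinuousFunction

namespace Omega1

instance inst_s15 : Nonempty Omega1 := ⟨⟨0, Cardinal.isRegular_aleph_one.ord_pos⟩⟩

theorem exists_isLUB_range_s15 (x : ℕ → Omega1) : ∃ δ, IsLUB (range x) δ := by
  have hlt : ⨆ n, (x n).1 < (Cardinal.aleph 1).ord := by
    refine Ordinal.iSup_lt_of_lt_cof ?_ fun n => (x n).2
    rw [Cardinal.isRegular_aleph_one.cof_ord, Cardinal.mk_nat]
    exact Cardinal.aleph0_lt_aleph_one
  refine ⟨⟨_, hlt⟩, ?_, ?_⟩
  · rintro _ ⟨n, rfl⟩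
    exact le_ciSup Ordinal.bddAbove_of_small n
  · intro b hb
    exact ciSup_le fun n => show (x n).1 ≤ b.1 from hb (mem_range_self n)

instance : CountableInterFilter (atTop : Filter Omega1) :=
  countableInterFilter_atTop_of_bddAbove_range fun x =>
    (exists_isLUB_range_s15 x).elim fun _ h => h.bddAbove

theorem eventuallyConst_atTop {E : Type*} [MetricSpace E] {f : Omega1 → E} (hf : Continuous f) :
    EventuallyConst f atTop :=
  eventuallyConst_of_cauchy_map <| hf.cauchySeq_of_forall_monotone_tendsto fun x hx =>
    (exists_isLUB_range_s15 x).imp fun _ => tendsto_atTop_isLUB hx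

theorem exists_tendsto_atTop {E : Type*} [MetricSpace E] {f : Omega1 → E} (hf : Continuous f) :
    ∃ c, Tendsto f atTop (𝓝 c) :=
  have : Nonempty E := ⟨f (Classical.arbitrary _)⟩
  (eventuallyConst_atTop hf).eventuallyEq_const.imp fun _ hc => tendsto_const_nhds.congr' hc.symm

variable {𝕜 E : Type*} [NontriviallyNormedField 𝕜] [NormedAddCommGroup E] [NormedSpace 𝕜 E]

variable (𝕜) in
noncomputable def limAtTop : (Omega1 →ᵇ E) →L[𝕜] E :=
  BoundedContinuousFunction.limCLM 𝕜 atTop fun f => exists_tendsto_atTop f.continuous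

theorem limAtTop_eq_of_eventually_eq {f : Omega1 →ᵇ E} {c : E} (hf : ∀ᶠ x in atTop, f x = c) :
    limAtTop 𝕜 f = c :=
  BoundedContinuousFunction.limCLM_eq_of_tendsto (tendsto_const_nhds.congr' (EventuallyEq.symm hf))

variable (𝕜) in
theorem eventually_eq_limAtTop (f : Omega1 →ᵇ E) : ∀ᶠ x in atTop, f x = limAtTop 𝕜 f := by
  obtain ⟨c, hc⟩ := (eventuallyConst_atTop f.continuous).eventuallyEq_const
  rwa [limAtTop_eq_of_eventually_eq hc]

end Omega1

/-- The functional `Λ` on `C_b(ω₁)` assigning to `f` its eventual constant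
value is a well-defined bounded linear functional of norm one, and it is sequentially
continuous for uniform convergence on compacts along sup-norm-bounded sequences. -/
theorem stmt15 :
    ∃ Λ : BoundedContinuousFunction Omega1 ℝ →L[ℝ] ℝ,
      (∀ (f : BoundedContinuousFunction Omega1 ℝ) (c : ℝ),
        (∃ α : Omega1, ∀ β : Omega1, α ≤ β → f β = c) → Λ f = c) ∧
      ‖Λ‖ = 1 ∧
      (∀ (f : ℕ → BoundedContinuousFunction Omega1 ℝ) (M : ℝ),
        (∀ n, ‖f n‖ ≤ M) →
        (∀ K : Set Omega1, IsCompact K → ∀ ε > (0 : ℝ),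
          ∃ N : ℕ, ∀ n ≥ N, ∀ x ∈ K, |f n x| ≤ ε) →
        Filter.Tendsto (fun n => Λ (f n)) Filter.atTop (nhds 0)) := by
  refine ⟨Omega1.limAtTop ℝ,
    fun f c hc => Omega1.limAtTop_eq_of_eventually_eq (eventually_atTop.2 hc), ?_, fun f M _ hK => ?_⟩
  · have hΛ_one : Omega1.limAtTop ℝ (1 : Omega1 →ᵇ ℝ) = 1 :=
      Omega1.limAtTop_eq_of_eventually_eq (.of_forall fun _ => rfl)
    refine le_antisymm BoundedContinuousFunction.norm_limCLM_le ?_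
    simpa [hΛ_one] using (Omega1.limAtTop ℝ).le_opNorm (1 : Omega1 →ᵇ ℝ)
  · refine tendsto_of_forall_eventually_eq (fun n => Omega1.eventually_eq_limAtTop ℝ (f n))
      fun x => Metric.tendsto_atTop.2 fun ε hε => ?_
    obtain ⟨N, hN⟩ := hK {x} isCompact_singleton (ε / 2) (half_pos hε)
    refine ⟨N, fun n hn => ?_⟩
    rw [Real.dist_eq, sub_zero]
    linarith [hN n hn x rfl]
end

section
/- Let X be a Banach space with an additional locally convex topology τ given by a family of seminorms 𝒮 with p ≤ ‖·‖ for all p ∈ 𝒮, and let τ_m be the mixed topology generated by the seminorms x ↦ sup_n a_n p_n(x) for sequences (p_n) ⊆ 𝒮 and positive null sequences (a_n). Then a sequence (x_k) converges to 0 in τ_m if and only if (x_k) is norm-bounded and x_k → 0 in τ. -/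
/-!
If `x_k` is bounded by `C` and `p(x_k) → 0` for each `p ∈ 𝒮`, then in `sup_n a_n p_n(x_k)` the tail
`n ≥ N` is at most `C · sup_{n ≥ N} a_n`, which is small, and the finitely many terms `n < N` tend
to `0`. Conversely, the choice `a_n = 1/(n+1)` with a constant `p_n = p` recovers `p(x_k) → 0`.
If `(x_k)` were unbounded, then since `‖·‖ = sup 𝒮` one could choose `k_n` and `p_n ∈ 𝒮` with
`p_n(x_{k_n}) > (n+1)²`; the mixed seminorm with `a_n = 1/(n+1)` is then larger than `n + 1` at
`x_{k_n}`, so along `(x_k)` it is unbounded and cannot tend to `0`.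
-/

open Filter Topology

theorem le_ciSup_mul_of_le {ι : Type*} {a f : ι → ℝ} {A M : ℝ} (ha0 : ∀ i, 0 ≤ a i)
    (haA : ∀ i, a i ≤ A) (hf0 : ∀ i, 0 ≤ f i) (hfM : ∀ i, f i ≤ M) (j : ι) :
    a j * f j ≤ ⨆ i, a i * f i :=
  le_ciSup ⟨A * M, by
    rintro _ ⟨i, rfl⟩
    exact mul_le_mul (haA i) (hfM i) (hf0 i) ((ha0 i).trans (haA i))⟩ j

theorem tendsto_iSup_mul_of_forall_le {ι : Type*} {l : Filter ι} {f : ℕ → ι → ℝ} {a : ℕ → ℝ}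
    {C : ℝ} (hf0 : ∀ n k, 0 ≤ f n k) (hfC : ∀ n k, f n k ≤ C)
    (hf : ∀ n, Tendsto (f n) l (𝓝 0)) (ha0 : ∀ n, 0 ≤ a n) (ha : Tendsto a atTop (𝓝 0)) :
    Tendsto (fun k => ⨆ n, a n * f n k) l (𝓝 0) := by
  refine tendsto_order.2 ⟨fun ε hε => Eventually.of_forall fun k =>
    hε.trans_le (Real.iSup_nonneg fun n => mul_nonneg (ha0 n) (hf0 n k)), fun ε hε => ?_⟩
  obtain ⟨N, htail⟩ := eventually_atTop.1 <|
    (tendsto_order.1 (by simpa using ha.mul_const C)).2 (ε / 2) (half_pos hε)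
  have hhead : ∀ᶠ k in l, ∀ n ∈ Finset.range N, a n * f n k < ε / 2 :=
    (eventually_all_finset _).2 fun n _ =>
      (tendsto_order.1 (by simpa using (hf n).const_mul (a n))).2 (ε / 2) (half_pos hε)
  filter_upwards [hhead] with k hk
  refine (ciSup_le fun n => ?_).trans_lt (half_lt_self hε)
  rcases lt_or_ge n N with hn | hn
  · exact (hk n (Finset.mem_range.2 hn)).le
  · exact (mul_le_mul_of_nonneg_left (hfC n k) (ha0 n)).trans (htail n hn).le

section Seminorms

variable {𝕜 X : Type*} [SeminormedRing 𝕜] [SeminormedAddCommGroup X] [SMul 𝕜 X]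

theorem le_iSup_one_div_succ_mul {q : ℕ → Seminorm 𝕜 X} (hq : ∀ n x, q n x ≤ ‖x‖) (x : X)
    (m : ℕ) : 1 / ((m : ℝ) + 1) * q m x ≤ ⨆ n : ℕ, 1 / ((n : ℝ) + 1) * q n x :=
  le_ciSup_mul_of_le (fun n => Nat.one_div_pos_of_nat.le)
    (fun n => div_le_one_of_le₀ (by linarith [n.cast_nonneg (α := ℝ)]) (by positivity))
    (fun n => apply_nonneg _ _) (fun n => hq n x) m

theorem tendsto_seminorm_of_tendsto_iSup {p : Seminorm 𝕜 X} (hp : ∀ x, p x ≤ ‖x‖)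
    {x : ℕ → X} (H : Tendsto (fun k => ⨆ n : ℕ, 1 / ((n : ℝ) + 1) * p (x k)) atTop (𝓝 0)) :
    Tendsto (fun k => p (x k)) atTop (𝓝 0) :=
  tendsto_of_tendsto_of_tendsto_of_le_of_le tendsto_const_nhds H (fun k => apply_nonneg _ _)
    fun k => by simpa using le_iSup_one_div_succ_mul (q := fun _ => p) (fun _ => hp) (x k) 0

theorem exists_lt_apply_of_lt_norm {S : Set (Seminorm 𝕜 X)}
    (hnorm : ∀ x : X, ‖x‖ = ⨆ p : S, (p : Seminorm 𝕜 X) x) {x : X} {r : ℝ} (hr : 0 ≤ r)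
    (h : r < ‖x‖) : ∃ p : S, r < (p : Seminorm 𝕜 X) x := by
  rw [hnorm] at h
  cases isEmpty_or_nonempty S with
  | inl _ => exact absurd h (by simpa [Real.iSup_of_isEmpty] using hr)
  | inr _ => exact exists_lt_of_lt_ciSup h

theorem exists_norm_le_of_tendsto_iSup {S : Set (Seminorm 𝕜 X)}
    (hle : ∀ p ∈ S, ∀ x : X, p x ≤ ‖x‖) (hnorm : ∀ x : X, ‖x‖ = ⨆ p : S, (p : Seminorm 𝕜 X) x)
    {x : ℕ → X} (H : ∀ pn : ℕ → S, Tendsto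
      (fun k => ⨆ n : ℕ, 1 / ((n : ℝ) + 1) * (pn n : Seminorm 𝕜 X) (x k)) atTop (𝓝 0)) :
    ∃ C, ∀ k, ‖x k‖ ≤ C := by
  by_contra! hx
  have hlarge : ∀ n : ℕ, ∃ k, ∃ p : S, ((n : ℝ) + 1) ^ 2 < (p : Seminorm 𝕜 X) (x k) := fun n =>
    let ⟨k, hk⟩ := hx (((n : ℝ) + 1) ^ 2)
    ⟨k, exists_lt_apply_of_lt_norm hnorm (by positivity) hk⟩
  choose k pn hpn using hlarge
  obtain ⟨B, hB⟩ := (H pn).bddAbove_range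
  obtain ⟨n, hn⟩ := exists_nat_ge B
  have hn1 : (0 : ℝ) < n + 1 := by positivity
  have : (n : ℝ) + 1 < ⨆ m : ℕ, 1 / ((m : ℝ) + 1) * (pn m : Seminorm 𝕜 X) (x (k n)) :=
    calc (n : ℝ) + 1 < 1 / ((n : ℝ) + 1) * (pn n : Seminorm 𝕜 X) (x (k n)) := by
          rw [one_div_mul_eq_div, lt_div_iff₀ hn1, ← sq]
          exact hpn n
      _ ≤ _ := le_iSup_one_div_succ_mul (fun m => hle _ (pn m).2) _ n
  linarith [hB ⟨k n, rfl⟩]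

end Seminorms

theorem stmt16_general (X : Type*) [NormedAddCommGroup X] [NormedSpace ℝ X]
    (S : Set (Seminorm ℝ X))
    (hle : ∀ p ∈ S, ∀ x : X, p x ≤ ‖x‖)
    (hnorm : ∀ x : X, ‖x‖ = ⨆ p : S, (p : Seminorm ℝ X) x)
    (x : ℕ → X) :
    (∀ (pn : ℕ → S) (a : ℕ → ℝ), (∀ n, 0 ≤ a n) →
        Filter.Tendsto a Filter.atTop (nhds 0) →
        Filter.Tendsto (fun k => ⨆ n, a n * (pn n : Seminorm ℝ X) (x k))
          Filter.atTop (nhds 0)) ↔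
      ((∃ C : ℝ, ∀ k, ‖x k‖ ≤ C) ∧
        ∀ p ∈ S, Filter.Tendsto (fun k => p (x k)) Filter.atTop (nhds 0)) := by
  constructor
  · intro H
    have H' := fun pn => H pn _ (fun n => by positivity) tendsto_one_div_add_atTop_nhds_zero_nat
    exact ⟨exists_norm_le_of_tendsto_iSup hle hnorm H',
      fun p hp => tendsto_seminorm_of_tendsto_iSup (hle p hp) (H' fun _ => ⟨p, hp⟩)⟩
  · rintro ⟨⟨C, hC⟩, hconv⟩ pn a ha0 ha
    exact tendsto_iSup_mul_of_forall_le (fun n k => apply_nonneg _ _)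
      (fun n k => (hle _ (pn n).2 _).trans (hC k)) (fun n => hconv _ (pn n).2) ha0 ha

/-- With `τ_m` the mixed topology generated by the seminorms
`x ↦ sup_n a_n p_n(x)` (for `(p_n) ⊆ 𝒮` and positive null sequences `(a_n)`), a sequence
converges to `0` in `τ_m` iff it is norm-bounded and converges to `0` in `τ` (i.e. for
every seminorm in `𝒮`). -/
theorem stmt16 (X : Type*) [NormedAddCommGroup X] [NormedSpace ℝ X] [CompleteSpace X]
    (S : Set (Seminorm ℝ X))
    (hle : ∀ p ∈ S, ∀ x : X, p x ≤ ‖x‖)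
    (hnorm : ∀ x : X, ‖x‖ = ⨆ p : S, (p : Seminorm ℝ X) x)
    (x : ℕ → X) :
    (∀ (pn : ℕ → S) (a : ℕ → ℝ), (∀ n, 0 ≤ a n) →
        Filter.Tendsto a Filter.atTop (nhds 0) →
        Filter.Tendsto (fun k => ⨆ n, a n * (pn n : Seminorm ℝ X) (x k))
          Filter.atTop (nhds 0)) ↔
      ((∃ C : ℝ, ∀ k, ‖x k‖ ≤ C) ∧
        ∀ p ∈ S, Filter.Tendsto (fun k => p (x k)) Filter.atTop (nhds 0)) :=
  stmt16_general X S hle hnorm x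
end
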